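/- arXiv:2108.05024 — 3 statements merged into one kernel-verified Lean document; each statement's English description precedes it below -/
import Mathlib

section
/- Let A ∈ M_{N,N}(ℝ) with ρ(A) < 1, C ∈ ℝ^N, φ : M → M a bijection, and ω : M → ℝ bounded. Define f(m) := ∑_{j=0}^∞ A^j C ω(φ^{-j}(m)). Then f is the unique bounded function M → ℝ^N satisfying f(m) = A f(φ^{-1}(m)) + C ω(m) for all m ∈ M. -/
/-!
Because ω is bounded, the series `∑ⱼ ω(φ⁻ʲ m) • Aʲ C` is dominated, uniformly in `m`, by a
multiple of `∑ⱼ ‖Aʲ‖`, which converges since Gelfand's formula makes `‖Aʲ‖` decay geometrically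
when the spectral radius is below one. Splitting off the term `j = 0` gives the fixed-point
equation. The difference `h` of two bounded solutions satisfies `h m = Aⁿ h(φ⁻ⁿ m)` for every
`n`, hence `‖h m‖ ≤ ‖Aⁿ‖ sup ‖h‖ → 0`.
-/

open Filter Topology

-- The ℓ∞ operator norm on matrices is the operator norm for the sup norm on `Fin N → ℝ`.
attribute [local instance] Matrix.linftyOpNormedAddCommGroup Matrix.linftyOpNormedRing
  Matrix.linftyOpNormedAlgebra

theorem summable_norm_pow_of_spectralRadius_lt_one {A : Type*} [NormedRing A]
    [NormedAlgebra ℂ A] [CompleteSpace A] {a : A} (ha : spectralRadius ℂ a < 1) :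
    Summable fun n : ℕ => ‖a ^ n‖ := by
  obtain ⟨r, hρr, hr1⟩ := ENNReal.lt_iff_exists_nnreal_btwn.mp ha
  have hdecay : ∀ᶠ n : ℕ in atTop, ‖a ^ n‖ ≤ (r : ℝ) ^ n := by
    have gelfand := spectrum.pow_nnnorm_pow_one_div_tendsto_nhds_spectralRadius a
    filter_upwards [gelfand.eventually_lt_const hρr, eventually_ge_atTop 1] with n hn hn1
    rw [one_div, ENNReal.rpow_inv_lt_iff (by positivity), ENNReal.rpow_natCast, ← ENNReal.coe_pow,
      ENNReal.coe_lt_coe] at hn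
    exact_mod_cast hn.le
  refine .of_norm_bounded_eventually_nat (summable_geometric_of_lt_one r.2 (mod_cast hr1)) ?_
  exact hdecay.mono fun n hn => by rwa [norm_norm]

section Synchronization

variable {𝕜 E M : Type*} [NontriviallyNormedField 𝕜] [NormedAddCommGroup E] [NormedSpace 𝕜 E]

noncomputable def generalizedSynchronization (T : E →L[𝕜] E) (c : E) (φ : M ≃ M) (ω : M → 𝕜)
    (m : M) : E :=
  ∑' j : ℕ, ω (φ.symm^[j] m) • (T ^ j) c

variable (T : E →L[𝕜] E) (c : E) (φ : M ≃ M) {ω : M → 𝕜} {K : ℝ}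

theorem norm_smul_pow_apply_le {a : 𝕜} (ha : ‖a‖ ≤ K) (j : ℕ) :
    ‖a • (T ^ j) c‖ ≤ K * ‖c‖ * ‖T ^ j‖ :=
  calc ‖a • (T ^ j) c‖ = ‖a‖ * ‖(T ^ j) c‖ := norm_smul _ _
    _ ≤ K * (‖T ^ j‖ * ‖c‖) :=
      mul_le_mul ha ((T ^ j).le_opNorm c) (norm_nonneg _) ((norm_nonneg a).trans ha)
    _ = K * ‖c‖ * ‖T ^ j‖ := by ring

variable {T}

theorem summable_norm_smul_pow_apply (hT : Summable fun n : ℕ => ‖T ^ n‖)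
    (hω : ∀ m, ‖ω m‖ ≤ K) (m : M) :
    Summable fun j : ℕ => ‖ω (φ.symm^[j] m) • (T ^ j) c‖ :=
  (hT.mul_left (K * ‖c‖)).of_nonneg_of_le (fun _ => norm_nonneg _)
    fun j => norm_smul_pow_apply_le T c (hω _) j

theorem norm_generalizedSynchronization_le [CompleteSpace E]
    (hT : Summable fun n : ℕ => ‖T ^ n‖) (hω : ∀ m, ‖ω m‖ ≤ K) (m : M) :
    ‖generalizedSynchronization T c φ ω m‖ ≤ K * ‖c‖ * ∑' n : ℕ, ‖T ^ n‖ := by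
  rw [← tsum_mul_left]
  exact (norm_tsum_le_tsum_norm (summable_norm_smul_pow_apply c φ hT hω m)).trans
    ((summable_norm_smul_pow_apply c φ hT hω m).tsum_le_tsum
      (fun j => norm_smul_pow_apply_le T c (hω _) j) (hT.mul_left _))

theorem generalizedSynchronization_apply [CompleteSpace E]
    (hT : Summable fun n : ℕ => ‖T ^ n‖) (hω : ∀ m, ‖ω m‖ ≤ K) (m : M) :
    generalizedSynchronization T c φ ω m =
      T (generalizedSynchronization T c φ ω (φ.symm m)) + ω m • c := by
  have hsum : ∀ m, Summable fun j : ℕ => ω (φ.symm^[j] m) • (T ^ j) c :=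
    fun m => (summable_norm_smul_pow_apply c φ hT hω m).of_norm
  rw [generalizedSynchronization, (hsum m).tsum_eq_zero_add, add_comm, generalizedSynchronization,
    T.map_tsum (hsum _)]
  congr 2 with j
  rw [Function.iterate_succ_apply, pow_succ', mul_apply_eq_comp, map_smul]

theorem pow_apply_eq_of_forall_eq_apply {e : M → M} {h : M → E} (hh : ∀ m, h m = T (h (e m)))
    (n : ℕ) (m : M) : h m = (T ^ n) (h (e^[n] m)) := by
  induction n generalizing m with
  | zero => simp
  | succ n ih => rw [hh, ih, pow_succ', mul_apply_eq_comp, Function.iterate_succ_apply]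

theorem eq_zero_of_forall_eq_apply (hT : Tendsto (fun n : ℕ => ‖T ^ n‖) atTop (𝓝 0))
    {e : M → M} {h : M → E} (hb : ∃ K, ∀ m, ‖h m‖ ≤ K) (hh : ∀ m, h m = T (h (e m))) :
    h = 0 := by
  obtain ⟨K, hK⟩ := hb
  funext m
  have hle : ∀ n : ℕ, ‖h m‖ ≤ ‖T ^ n‖ * K := fun n =>
    calc ‖h m‖ = ‖(T ^ n) (h (e^[n] m))‖ := by rw [← pow_apply_eq_of_forall_eq_apply hh]
      _ ≤ ‖T ^ n‖ * K := (T ^ n).le_of_opNorm_le_of_le le_rfl (hK _)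
  exact norm_le_zero_iff.mp <| ge_of_tendsto' (by simpa using hT.mul_const K) hle

theorem eq_generalizedSynchronization [CompleteSpace E] (hT : Summable fun n : ℕ => ‖T ^ n‖)
    (hω : ∀ m, ‖ω m‖ ≤ K) {g : M → E} (hgb : ∃ K, ∀ m, ‖g m‖ ≤ K)
    (hg : ∀ m, g m = T (g (φ.symm m)) + ω m • c) :
    g = generalizedSynchronization T c φ ω := by
  obtain ⟨Kg, hKg⟩ := hgb
  refine sub_eq_zero.mp (eq_zero_of_forall_eq_apply hT.tendsto_atTop_zero (e := φ.symm) ?_ ?_)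
  · exact ⟨Kg + K * ‖c‖ * ∑' n : ℕ, ‖T ^ n‖, fun m =>
      (norm_sub_le _ _).trans (add_le_add (hKg m) (norm_generalizedSynchronization_le c φ hT hω m))⟩
  · intro m
    simp only [Pi.sub_apply, map_sub]
    rw [hg m, generalizedSynchronization_apply c φ hT hω m]
    abel

end Synchronization

namespace Matrix

variable {m n : Type*} [Fintype m] [Fintype n]

theorem linfty_opNorm_map_ofReal (A : Matrix m n ℝ) : ‖A.map (Complex.ofReal ·)‖ = ‖A‖ := by
  simp [linfty_opNorm_def]

variable [DecidableEq n]

theorem summable_linfty_opNorm_pow_of_spectralRadius_lt_one {A : Matrix n n ℝ}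
    (hA : spectralRadius ℂ (A.map (Complex.ofReal ·)) < 1) :
    Summable fun k : ℕ => ‖A ^ k‖ := by
  have : CompleteSpace (Matrix n n ℂ) := FiniteDimensional.complete ℂ _
  refine (summable_norm_pow_of_spectralRadius_lt_one hA).congr fun k => ?_
  rw [← linfty_opNorm_map_ofReal (A ^ k)]
  exact congrArg norm (Matrix.map_pow A Complex.ofRealHom k).symm

theorem mk_mulVecLin_pow {R : Type*} [CommRing R] [TopologicalSpace R] [IsTopologicalRing R]
    (A : Matrix n n R) (k : ℕ) :
    ContinuousLinearMap.mk (mulVecLin A) ^ k = ContinuousLinearMap.mk (mulVecLin (A ^ k)) := by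
  induction k with
  | zero => ext; simp
  | succ k ih =>
    ext v : 1
    rw [pow_succ', mul_apply_eq_comp, ih, pow_succ']
    exact mulVec_mulVec v A (A ^ k)

end Matrix

theorem stmt_5 (N : ℕ) (A : Matrix (Fin N) (Fin N) ℝ) (C : Fin N → ℝ)
    {M : Type*} (φ : M ≃ M) (ω : M → ℝ)
    (hρ : spectralRadius ℂ (A.map (Complex.ofReal ·)) < 1)
    (hω : ∃ K : ℝ, ∀ m, |ω m| ≤ K)
    (f : M → (Fin N → ℝ))
    (hf : f = fun m => ∑' j : ℕ, ω ((φ.symm : M → M)^[j] m) • ((A ^ j).mulVec C)) :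
    ((∃ K : ℝ, ∀ m, ‖f m‖ ≤ K) ∧
      ∀ m, f m = A.mulVec (f (φ.symm m)) + ω m • C) ∧
    ∀ g : M → (Fin N → ℝ), (∃ K : ℝ, ∀ m, ‖g m‖ ≤ K) →
      (∀ m, g m = A.mulVec (g (φ.symm m)) + ω m • C) → g = f := by
  set T : (Fin N → ℝ) →L[ℝ] (Fin N → ℝ) := ContinuousLinearMap.mk (Matrix.mulVecLin A)
  have hT : Summable fun k : ℕ => ‖T ^ k‖ := by
    simpa only [T, Matrix.mk_mulVecLin_pow, ← Matrix.linfty_opNorm_eq_opNorm] using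
      Matrix.summable_linfty_opNorm_pow_of_spectralRadius_lt_one hρ
  obtain ⟨K, hK⟩ := hω
  have hfT : f = generalizedSynchronization T C φ ω := by
    funext m
    simp only [hf, generalizedSynchronization, T, Matrix.mk_mulVecLin_pow]
    rfl
  subst hfT
  exact ⟨⟨⟨_, norm_generalizedSynchronization_le C φ hT hK⟩,
    generalizedSynchronization_apply C φ hT hK⟩,
    fun g hgb hg => eq_generalizedSynchronization C φ hT hK hgb hg⟩
end

section
/- Let A be a random N × N real matrix and C a random vector in ℝ^N whose N² + N entries are jointly independent random variables with atomless distributions, and let p₁, …, pₙ ∈ ℂ[x] (n ≤ N) be linearly independent polynomials of degree at most n-1. Then the vectors p₁(A)C, …, pₙ(A)C are linearly independent almost surely. -/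
/-!
Fix the rows `0, …, n-1` and regard the `n × n` minor of the matrix with columns `pⱼ(A) C` as a
polynomial in the `N² + N` entries of `A` and `C`. It is not the zero polynomial: at
`A = diag(0, 1, …, N-1)`, `C = (1, …, 1)` it is the determinant of `(pⱼ(i))ᵢⱼ`, which is invertible
because a nonzero polynomial of degree `< n` has fewer than `n` roots. The entries are independent,
so their joint law is a product of atomless measures, and by Fubini in one coordinate at a time the
real zero set of a nonzero polynomial is null for such a product.
-/

open MeasureTheory Polynomial

namespace MvPolynomial

variable {σ : Type*}

def realZeroLocus (P : MvPolynomial σ ℂ) : Set (σ → ℝ) :=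
  {x | eval (fun k => (x k : ℂ)) P = 0}

theorem measurableSet_realZeroLocus [Fintype σ] (P : MvPolynomial σ ℂ) :
    MeasurableSet P.realZeroLocus :=
  ((continuous_eval P).comp (by fun_prop)).measurable (measurableSet_singleton 0)

theorem realZeroLocus_eq_empty_of_isEmpty [IsEmpty σ] {P : MvPolynomial σ ℂ} (hP : P ≠ 0) :
    P.realZeroLocus = ∅ := by
  rw [eq_C_of_isEmpty P] at hP ⊢
  ext x
  simpa [realZeroLocus] using fun h => hP (by rw [h, map_zero])

theorem cons_mem_realZeroLocus_iff {m : ℕ} (P : MvPolynomial (Fin (m + 1)) ℂ) (t : ℝ)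
    (y : Fin m → ℝ) : Fin.cons t y ∈ P.realZeroLocus ↔
      ((finSuccEquiv ℂ m P).map (eval fun k => (y k : ℂ))).eval (t : ℂ) = 0 := by
  have hcons : (fun k => ((Fin.cons t y : Fin (m + 1) → ℝ) k : ℂ)) =
      Fin.cons (t : ℂ) fun k => (y k : ℂ) := by
    ext k; cases k using Fin.cases <;> simp
  simp only [realZeroLocus, Set.mem_ofPred_eq]
  rw [hcons, eval_eq_eval_mv_eval']

end MvPolynomial

theorem Polynomial.finite_setOf_eval_ofReal_eq_zero {q : ℂ[X]} (hq : q ≠ 0) :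
    {t : ℝ | q.eval (t : ℂ) = 0}.Finite :=
  ((Polynomial.finite_setOfPred_isRoot hq).preimage Complex.ofReal_injective.injOn :)

open MvPolynomial in
theorem MeasureTheory.Measure.pi_realZeroLocus_fin {m : ℕ} (ν : Fin m → Measure ℝ)
    [∀ i, SigmaFinite (ν i)] [∀ i, NullSingletonClass (ν i)] {P : MvPolynomial (Fin m) ℂ}
    (hP : P ≠ 0) : Measure.pi ν P.realZeroLocus = 0 := by
  induction m with
  | zero => rw [realZeroLocus_eq_empty_of_isEmpty hP, measure_empty]
  | succ m ih =>
    set q := finSuccEquiv ℂ m P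
    have hq : q.leadingCoeff ≠ 0 := by simpa [q] using hP
    have hlead_null := ih (fun i => ν i.succ) hq
    have hmp := (measurePreserving_piFinSuccAbove ν 0).symm
    have hmeas := P.measurableSet_realZeroLocus
    rw [← hmp.measure_preimage hmeas.nullMeasurableSet,
      Measure.prod_apply_symm (hmp.measurable hmeas)]
    -- Off the null zero set of the leading coefficient, every section in the first coordinate
    -- is the real root set of a nonzero univariate polynomial.
    refine (lintegral_congr_ae ?_).trans lintegral_zero
    filter_upwards [measure_eq_zero_iff_ae_notMem.mp hlead_null] with y hy
    have hqy : q.map (eval fun k => (y k : ℂ)) ≠ 0 := by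
      refine fun h => hy ?_
      simpa [realZeroLocus, Polynomial.coeff_map] using congrArg (Polynomial.coeff · q.natDegree) h
    refine ((finite_setOf_eval_ofReal_eq_zero hqy).subset fun t ht => ?_).countable.measure_zero _
    simp only [Set.mem_preimage, MeasurableEquiv.piFinSuccAbove_symm_apply,
      Fin.insertNthEquiv_zero] at ht
    exact (cons_mem_realZeroLocus_iff P t y).mp ht

open MvPolynomial in
theorem MeasureTheory.Measure.pi_realZeroLocus {ι : Type*} [Fintype ι] (ν : ι → Measure ℝ)
    [∀ i, SigmaFinite (ν i)] [∀ i, NullSingletonClass (ν i)] {P : MvPolynomial ι ℂ}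
    (hP : P ≠ 0) : Measure.pi ν P.realZeroLocus = 0 := by
  let e : Fin (Fintype.card ι) ≃ ι := (Fintype.equivFin ι).symm
  have hmp := measurePreserving_piCongrLeft ν e
  have hpre : MeasurableEquiv.piCongrLeft (fun _ => ℝ) e ⁻¹' P.realZeroLocus =
      (rename e.symm P).realZeroLocus := by
    ext x
    simp [realZeroLocus, eval_rename, Function.comp_def, MeasurableEquiv.coe_piCongrLeft,
      Equiv.piCongrLeft_apply_eq_cast]
  rw [← hmp.measure_preimage P.measurableSet_realZeroLocus.nullMeasurableSet, hpre]
  exact pi_realZeroLocus_fin _ (by simpa using (rename_injective _ e.symm.injective).ne hP)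

theorem Matrix.linearIndependent_col_of_det_submatrix_ne_zero {K m n : Type*} [Field K]
    [Fintype n] [DecidableEq n] (M : Matrix m n K) (e : n → m) (h : (M.submatrix e id).det ≠ 0) :
    LinearIndependent K M.col :=
  .of_comp (LinearMap.funLeft K K e) <|
    Matrix.linearIndependent_cols_iff_isUnit.mpr ((Matrix.isUnit_iff_isUnit_det _).mpr h.isUnit)

theorem Polynomial.det_eval_ne_zero {K ι : Type*} [Field K] [Fintype ι] [DecidableEq ι]
    {x : ι → K} (hx : Function.Injective x) {p : ι → K[X]}
    (hdeg : ∀ j, (p j).degree < Fintype.card ι) (hli : LinearIndependent K p) :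
    (Matrix.of fun i j => (p j).eval (x i)).det ≠ 0 := by
  let evalAt : K[X] →ₗ[K] ι → K := LinearMap.pi fun i => leval (x i)
  have hspan : Submodule.span K (Set.range p) ≤ degreeLT K (Fintype.card ι) :=
    Submodule.span_le.mpr <| Set.range_subset_iff.mpr fun j => mem_degreeLT.mpr (hdeg j)
  have hdisj : Disjoint (Submodule.span K (Set.range p)) (LinearMap.ker evalAt) := by
    refine Submodule.disjoint_def.mpr fun q hq hker => ?_
    refine eq_zero_of_degree_lt_of_eval_index_eq_zero (s := Finset.univ) hx.injOn ?_
      fun i _ => congrFun hker i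
    simpa using mem_degreeLT.mp (hspan hq)
  have hcols := Matrix.linearIndependent_cols_iff_isUnit.mp (hli.map hdisj)
  exact ((Matrix.isUnit_iff_isUnit_det _).mp hcols).ne_zero

namespace Matrix

variable {K R S : Type*} [Field K] [CommRing R] [Algebra K R] [CommRing S] [Algebra K S]
  {m n : Type*} [Fintype m] [DecidableEq m]

noncomputable def polyKrylov (p : n → K[X]) (A : Matrix m m R) (c : m → R) : Matrix m n R :=
  of fun i j => (aeval A (p j) *ᵥ c) i

theorem col_polyKrylov (p : n → K[X]) (A : Matrix m m R) (c : m → R) :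
    (polyKrylov p A c).col = fun j => aeval A (p j) *ᵥ c :=
  rfl

theorem map_polyKrylov (φ : R →ₐ[K] S) (p : n → K[X]) (A : Matrix m m R) (c : m → R) :
    (polyKrylov p A c).map φ = polyKrylov p (A.map φ) (φ ∘ c) := by
  ext i j
  have hA : (aeval A (p j)).map φ = aeval (A.map φ) (p j) :=
    (aeval_algHom_apply φ.mapMatrix A (p j)).symm
  simp only [polyKrylov, map_apply, of_apply, ← hA]
  exact RingHom.map_mulVec φ.toRingHom _ c i

theorem polyKrylov_diagonal_one (p : n → K[X]) (d : m → K) :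
    polyKrylov p (diagonal d) 1 = of fun i j => (p j).eval (d i) := by
  ext i j
  have hd : aeval (diagonal d) (p j) = diagonal fun i => (p j).eval (d i) := by
    rw [← diagonalAlgHom_apply (R := K), aeval_algHom_apply, aeval_pi_apply]
    rfl
  simp [polyKrylov, hd, mulVec_diagonal]

variable [Fintype n] [DecidableEq n]

noncomputable def genericKrylovMinor (p : n → K[X]) (e : n → m) :
    MvPolynomial ((m × m) ⊕ m) K :=
  ((polyKrylov p (of fun i j => .X (.inl (i, j))) fun i => .X (.inr i)).submatrix e id).det

theorem eval_genericKrylovMinor (p : n → K[X]) (e : n → m) (x : (m × m) ⊕ m → K) :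
    MvPolynomial.eval x (genericKrylovMinor p e) =
      ((polyKrylov p (of fun i j => x (.inl (i, j))) (x ∘ .inr)).submatrix e id).det := by
  change MvPolynomial.aeval x _ = _
  rw [genericKrylovMinor, AlgHom.map_det,
    AlgHom.mapMatrix_apply, ← submatrix_map, map_polyKrylov]
  congr 3
  · ext i j; simp
  · ext i; simp

theorem genericKrylovMinor_ne_zero [Infinite K] {p : n → K[X]} {e : n → m}
    (he : Function.Injective e) (hdeg : ∀ j, (p j).degree < Fintype.card n)
    (hli : LinearIndependent K p) : genericKrylovMinor p e ≠ 0 := by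
  let d : m → K := Infinite.natEmbedding K ∘ (↑) ∘ Fintype.equivFin m
  have hd : Function.Injective d :=
    (Infinite.natEmbedding K).injective.comp (Fin.val_injective.comp (Fintype.equivFin m).injective)
  -- the witness `A = diagonal d`, `c = 1`
  let x : (m × m) ⊕ m → K := Sum.elim (fun ij => diagonal d ij.1 ij.2) 1
  have hwitness : MvPolynomial.eval x (genericKrylovMinor p e) =
      (of fun i j => (p j).eval ((d ∘ e) i)).det := by
    rw [eval_genericKrylovMinor, show (of fun i j => x (.inl (i, j))) = diagonal d from rfl,
      show x ∘ .inr = 1 from rfl, polyKrylov_diagonal_one]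
    rfl
  refine fun h0 => Polynomial.det_eval_ne_zero (hd.comp he) hdeg hli ?_
  rw [← hwitness, h0, map_zero]

theorem linearIndependent_of_eval_genericKrylovMinor_ne_zero {p : n → K[X]} {e : n → m}
    {x : (m × m) ⊕ m → K} (h : MvPolynomial.eval x (genericKrylovMinor p e) ≠ 0) :
    LinearIndependent K (polyKrylov p (of fun i j => x (.inl (i, j))) (x ∘ .inr)).col :=
  linearIndependent_col_of_det_submatrix_ne_zero _ e (by rwa [eval_genericKrylovMinor] at h)

end Matrix

theorem ProbabilityTheory.iIndepFun.measure_eval_eq_zero {Ω ι : Type*} [MeasurableSpace Ω]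
    {μ : Measure Ω} [IsProbabilityMeasure μ] [Fintype ι] {Y : ι → Ω → ℝ}
    (hindep : iIndepFun Y μ) (hm : ∀ k, Measurable (Y k))
    (hatomless : ∀ k, ∀ a : ℝ, μ {ω | Y k ω = a} = 0) {P : MvPolynomial ι ℂ} (hP : P ≠ 0) :
    μ {ω | MvPolynomial.eval (fun k => (Y k ω : ℂ)) P = 0} = 0 := by
  have : ∀ k, NullSingletonClass (μ.map (Y k)) := fun k =>
    ⟨fun a => by rw [Measure.map_apply (hm k) (measurableSet_singleton a)]; exact hatomless k a⟩
  change μ ((fun ω k => Y k ω) ⁻¹' P.realZeroLocus) = 0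
  rw [← Measure.map_apply (measurable_pi_lambda _ hm) P.measurableSet_realZeroLocus,
    hindep.map_fun_eq_pi_map fun k => (hm k).aemeasurable]
  exact Measure.pi_realZeroLocus _ hP

theorem stmt_16 {Ω : Type*} [MeasurableSpace Ω] (μ : Measure Ω) [IsProbabilityMeasure μ]
    (N n : ℕ) (hnN : n ≤ N)
    (A : Ω → Matrix (Fin N) (Fin N) ℝ) (C : Ω → (Fin N → ℝ))
    (Y : (Fin N × Fin N) ⊕ Fin N → Ω → ℝ)
    (hY : Y = Sum.elim (fun p ω => A ω p.1 p.2) (fun i ω => C ω i))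
    (hm : ∀ k, Measurable (Y k))
    (hindep : ProbabilityTheory.iIndepFun Y μ)
    (hatomless : ∀ k, ∀ a : ℝ, μ {ω | Y k ω = a} = 0)
    (p : Fin n → Polynomial ℂ) (hdeg : ∀ j, (p j).degree < n)
    (hli : LinearIndependent ℂ p) :
    μ {ω | ¬ LinearIndependent ℂ
        (fun j : Fin n =>
          (Polynomial.aeval ((A ω).map (Complex.ofReal ·)) (p j)).mulVec
            (fun i => (C ω i : ℂ)))} = 0 := by
  have hP : Matrix.genericKrylovMinor p (Fin.castLE hnN) ≠ 0 :=
    Matrix.genericKrylovMinor_ne_zero (Fin.castLE_injective hnN) (by simpa using hdeg) hli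
  refine measure_mono_null (fun ω hω => by_contra fun hminor => hω ?_)
    (hindep.measure_eval_eq_zero hm hatomless hP)
  have hAω : (Matrix.of fun i j => (Y (.inl (i, j)) ω : ℂ)) = (A ω).map (↑) := by
    ext i j; simp [hY]
  have hCω : (fun k => (Y k ω : ℂ)) ∘ Sum.inr = fun i => (C ω i : ℂ) := by
    ext i; simp [hY]
  have hcols := Matrix.linearIndependent_of_eval_genericKrylovMinor_ne_zero hminor
  rwa [hAω, hCω, Matrix.col_polyKrylov] at hcols
end

section
/- Let A be a random N × N real matrix and C a random vector in ℝ^N with jointly independent atomless entries. Then the vectors C, AC, A²C, …, A^{N-1}C are linearly independent almost surely. -/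
/-!
The Krylov vectors `C, AC, …, A^{N-1}C` are dependent exactly when the determinant of the matrix
they form vanishes, and this determinant is a polynomial in the entries of `A` and `C`. It is not
the zero polynomial: at `A = diag(0, 1, …, N-1)`, `C = (1, …, 1)` it is a Vandermonde determinant.
By independence the joint law of the entries is a product of atomless measures, and such a product
gives zero mass to the zero set of a nonzero polynomial: by induction on the number of variables,
for almost every value of all but the first one the leading coefficient in the first variable does
not vanish, so only finitely many values of the first variable are roots, and Fubini concludes.
-/

open MeasureTheory MvPolynomial

namespace Polynomial

theorem measure_setOf_eval_eq_zero {R : Type*} [CommRing R] [IsDomain R] [MeasurableSpace R]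
    {μ : Measure R} [NullSingletonClass μ] {p : R[X]} (hp : p ≠ 0) : μ {a | p.eval a = 0} = 0 :=
  (finite_setOfPred_isRoot hp).measure_zero μ

end Polynomial

namespace MvPolynomial

variable {R : Type*} [CommRing R] [MeasurableSpace R] [MeasurableAdd₂ R] [MeasurableMul₂ R]

theorem measurable_eval {σ : Type*} (p : MvPolynomial σ R) :
    Measurable fun x : σ → R => eval x p := by
  induction p using MvPolynomial.induction_on with
  | C a => simp
  | add p q hp hq => simp only [map_add]; exact hp.add hq
  | mul_X p i hp => simp only [map_mul, eval_X]; exact hp.mul (measurable_pi_apply i)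

variable [MeasurableSingletonClass R]

theorem measurableSet_setOf_eval_eq_zero {σ : Type*} (p : MvPolynomial σ R) :
    MeasurableSet {x : σ → R | eval x p = 0} :=
  measurable_eval p (measurableSet_singleton 0)

variable [IsDomain R]

theorem measure_pi_fin_setOf_eval_eq_zero {n : ℕ} (ν : Fin n → Measure R)
    [∀ i, SigmaFinite (ν i)] [∀ i, NullSingletonClass (ν i)] {p : MvPolynomial (Fin n) R}
    (hp : p ≠ 0) : Measure.pi ν {x | eval x p = 0} = 0 := by
  induction n with
  | zero =>
    obtain ⟨c, rfl⟩ := C_surjective (Fin 0) p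
    have hc : c ≠ 0 := by rintro rfl; exact hp C_0
    simp [hc]
  | succ n ih =>
    set q := finSuccEquiv R n p
    have hq : q.leadingCoeff ≠ 0 := by simpa [q] using hp
    have hlead := ih (fun j => ν j.succ) hq
    let e := MeasurableEquiv.piFinSuccAbove (fun _ : Fin (n + 1) => R) 0
    rw [← (measurePreserving_piFinSuccAbove ν 0).symm.measure_preimage_equiv,
      Measure.prod_apply_symm (e.symm.measurable (measurableSet_setOf_eval_eq_zero p))]
    refine lintegral_eq_zero_of_ae_eq_zero ?_
    filter_upwards [measure_eq_zero_iff_ae_notMem.mp hlead] with y hy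
    have hqy : q.map (eval y) ≠ 0 := fun h => hy <| by
      simpa only [Polynomial.coeff_map, Polynomial.coeff_zero, Polynomial.leadingCoeff] using
        congrArg (·.coeff q.natDegree) h
    rw [Pi.zero_apply]
    convert Polynomial.measure_setOf_eval_eq_zero (μ := ν 0) hqy using 2
    ext a
    simp [e, Fin.consEquiv, eval_eq_eval_mv_eval', q]

theorem measure_pi_setOf_eval_eq_zero {ι : Type*} [Fintype ι] (ν : ι → Measure R)
    [∀ i, SigmaFinite (ν i)] [∀ i, NullSingletonClass (ν i)] {p : MvPolynomial ι R}
    (hp : p ≠ 0) : Measure.pi ν {x | eval x p = 0} = 0 := by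
  let f := (Fintype.equivFin ι).symm
  have hpf : rename f.symm p ≠ 0 := by
    simpa using (rename_injective _ f.symm.injective).ne hp
  rw [← (measurePreserving_piCongrLeft (μ := ν) f).measure_preimage_equiv]
  convert measure_pi_fin_setOf_eval_eq_zero (fun j => ν (f j)) hpf using 2
  ext y
  have hy : MeasurableEquiv.piCongrLeft (fun _ => R) f y = y ∘ f.symm := by
    funext i
    obtain ⟨j, rfl⟩ := f.surjective i
    simp [MeasurableEquiv.piCongrLeft_apply_apply]
  simp [hy, eval_rename]

end MvPolynomial

theorem ProbabilityTheory.iIndepFun.measure_setOf_eval_eq_zero {Ω ι R : Type*}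
    [MeasurableSpace Ω] {μ : Measure Ω} [Fintype ι] [CommRing R] [IsDomain R] [MeasurableSpace R]
    [MeasurableSingletonClass R] [MeasurableAdd₂ R] [MeasurableMul₂ R] {Y : ι → Ω → R}
    (hY : ∀ k, Measurable (Y k)) (hindep : iIndepFun Y μ)
    (hatomless : ∀ k a, μ {ω | Y k ω = a} = 0) {p : MvPolynomial ι R} (hp : p ≠ 0) :
    μ {ω | eval (fun k => Y k ω) p = 0} = 0 := by
  have := hindep.isProbabilityMeasure
  have : ∀ k, NullSingletonClass (μ.map (Y k)) := fun k =>
    ⟨fun a => by rw [Measure.map_apply (hY k) (measurableSet_singleton a)]; exact hatomless k a⟩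
  have hmeas : Measurable fun ω k => Y k ω := measurable_pi_lambda _ hY
  change μ ((fun ω k => Y k ω) ⁻¹' {x | eval x p = 0}) = 0
  rw [← Measure.map_apply hmeas (measurableSet_setOf_eval_eq_zero p),
    hindep.map_fun_eq_pi_map fun k => (hY k).aemeasurable]
  exact measure_pi_setOf_eval_eq_zero _ hp

namespace Matrix

variable {R S : Type*} [CommRing R] [CommRing S] {N : ℕ}

def krylov (A : Matrix (Fin N) (Fin N) R) (c : Fin N → R) : Matrix (Fin N) (Fin N) R :=
  of fun i j => (A ^ (j : ℕ) *ᵥ c) i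

theorem krylov_map (f : R →+* S) (A : Matrix (Fin N) (Fin N) R) (c : Fin N → R) :
    (krylov A c).map f = krylov (A.map f) (f ∘ c) := by
  ext i j
  simp [krylov, RingHom.map_mulVec, Matrix.map_pow]

theorem krylov_diagonal_one (v : Fin N → R) : krylov (diagonal v) 1 = vandermonde v := by
  ext i j
  simp [krylov, diagonal_pow, mulVec_diagonal, vandermonde_apply]

theorem linearIndependent_krylov_iff {K : Type*} [Field K] (A : Matrix (Fin N) (Fin N) K)
    (c : Fin N → K) :
    LinearIndependent K (fun j : Fin N => A ^ (j : ℕ) *ᵥ c) ↔ (krylov A c).det ≠ 0 := by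
  rw [← isUnit_iff_ne_zero, ← isUnit_iff_isUnit_det, ← linearIndependent_cols_iff_isUnit]
  rfl

variable (R N) in
noncomputable def genericKrylovDet : MvPolynomial ((Fin N × Fin N) ⊕ Fin N) R :=
  (krylov (of fun a b => X (.inl (a, b))) fun k => X (.inr k)).det

theorem eval_genericKrylovDet (x : (Fin N × Fin N) ⊕ Fin N → R) :
    eval x (genericKrylovDet R N) = (krylov (of fun a b => x (.inl (a, b))) (x ∘ .inr)).det := by
  rw [genericKrylovDet, RingHom.map_det, RingHom.mapMatrix_apply, krylov_map]
  congr 2 <;> ext <;> simp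

theorem genericKrylovDet_ne_zero [IsDomain R] [CharZero R] : genericKrylovDet R N ≠ 0 := by
  intro h
  let v : Fin N → R := fun i => ((i : ℕ) : R)
  have hv : Function.Injective v := Nat.cast_injective.comp Fin.val_injective
  have := congrArg (eval (Sum.elim (fun p => diagonal v p.1 p.2) 1)) h
  rw [eval_genericKrylovDet, map_zero] at this
  exact det_vandermonde_ne_zero_iff.mpr hv (krylov_diagonal_one v ▸ this)

end Matrix

theorem stmt_17_general {Ω : Type*} [MeasurableSpace Ω] (μ : Measure Ω)
    (N : ℕ)
    (A : Ω → Matrix (Fin N) (Fin N) ℝ) (C : Ω → (Fin N → ℝ))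
    (Y : (Fin N × Fin N) ⊕ Fin N → Ω → ℝ)
    (hY : Y = Sum.elim (fun p ω => A ω p.1 p.2) (fun i ω => C ω i))
    (hm : ∀ k, Measurable (Y k))
    (hindep : ProbabilityTheory.iIndepFun Y μ)
    (hatomless : ∀ k, ∀ a : ℝ, μ {ω | Y k ω = a} = 0) :
    μ {ω | ¬ LinearIndependent ℝ (fun j : Fin N => ((A ω) ^ (j : ℕ)).mulVec (C ω))} = 0 := by
  have hbad : {ω | ¬ LinearIndependent ℝ (fun j : Fin N => ((A ω) ^ (j : ℕ)).mulVec (C ω))} =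
      {ω | eval (fun k => Y k ω) (Matrix.genericKrylovDet ℝ N) = 0} := by
    subst hY
    ext ω
    rw [Set.mem_ofPred_eq, Set.mem_ofPred_eq, Matrix.linearIndependent_krylov_iff, not_not,
      Matrix.eval_genericKrylovDet]
    rfl
  rw [hbad]
  exact hindep.measure_setOf_eval_eq_zero hm hatomless Matrix.genericKrylovDet_ne_zero

theorem stmt_17 {Ω : Type*} [MeasurableSpace Ω] (μ : Measure Ω) [IsProbabilityMeasure μ]
    (N : ℕ)
    (A : Ω → Matrix (Fin N) (Fin N) ℝ) (C : Ω → (Fin N → ℝ))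
    (Y : (Fin N × Fin N) ⊕ Fin N → Ω → ℝ)
    (hY : Y = Sum.elim (fun p ω => A ω p.1 p.2) (fun i ω => C ω i))
    (hm : ∀ k, Measurable (Y k))
    (hindep : ProbabilityTheory.iIndepFun Y μ)
    (hatomless : ∀ k, ∀ a : ℝ, μ {ω | Y k ω = a} = 0) :
    μ {ω | ¬ LinearIndependent ℝ (fun j : Fin N => ((A ω) ^ (j : ℕ)).mulVec (C ω))} = 0 :=
  stmt_17_general μ N A C Y hY hm hindep hatomless
end
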